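/- arXiv:1110.5858 — 5 statements merged into one kernel-verified Lean document; each statement's English description precedes it below -/
import Mathlib

section
/- Let n be a positive integer, let S be an n×n matrix with real entries (regarded as a complex matrix) satisfying Sᵀ = S and S·S = 1, and let H be an n×n complex Hermitian matrix whose entrywise complex conjugate satisfies conj(H) = S·H·S. Then there exists an orthonormal basis (φ₁,…,φₙ) of ℂⁿ consisting of eigenvectors of H such that for every index i there is a complex number pᵢ with |pᵢ| = 1 and φᵢ = pᵢ • (S · conj(φᵢ)). -/
/-!
The matrix `U = ((1 + i)/2) • 1 + ((1 - i)/2) • S` is a square root of the involution `S`: it acts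
as `1` on the `+1`-eigenspace of `S` and as `i` on the `-1`-eigenspace. For real symmetric `S` it
is unitary with `conj U = Uᴴ = U S`, so the condition `conj H = S H S` says exactly that
`K = Uᴴ H U` is real. A real orthonormal eigenbasis `ψ` of `K` then gives the eigenbasis
`φ = U ψ` of `H`, and `S conj φ = S U S ψ = U ψ = φ`: every phase can be taken to be `1`.
-/

open Matrix

namespace Matrix

variable {ι : Type*} [Fintype ι] [DecidableEq ι]

theorem linearIndependent_of_star_dotProduct_eq_ite {m R : Type*} [Fintype m] [CommRing R]
    [StarRing R] {v : ι → m → R} (hv : ∀ i j, star (v i) ⬝ᵥ v j = if i = j then 1 else 0) :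
    LinearIndependent R v := by
  refine Fintype.linearIndependent_iff.mpr fun g hg j => ?_
  simpa [dotProduct_sum, dotProduct_smul, hv] using congrArg (star (v j) ⬝ᵥ ·) hg

omit [DecidableEq ι] in
theorem star_mulVec_dotProduct_mulVec_of_isometry {m R : Type*} [Fintype m] [DecidableEq m]
    [CommRing R] [StarRing R] {U : Matrix ι m R} (hU : Uᴴ * U = 1) (v w : m → R) :
    star (U *ᵥ v) ⬝ᵥ (U *ᵥ w) = star v ⬝ᵥ w := by
  rw [star_mulVec, ← dotProduct_mulVec, mulVec_mulVec, hU, one_mulVec]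

theorem exists_orthonormal_real_eigenvectors {K : Matrix ι ι ℂ} (hK : K.IsHermitian)
    (hKreal : K.map (starRingEnd ℂ) = K) :
    ∃ ψ : ι → ι → ℂ, (∀ i j, star (ψ i) ⬝ᵥ ψ j = if i = j then 1 else 0) ∧
      ∀ i, star (ψ i) = ψ i ∧ ∃ μ : ℂ, K *ᵥ ψ i = μ • ψ i := by
  set Kr := K.map Complex.re
  have hKr : Kr.IsHermitian := hK.map _ fun z => by simp
  have hK_eq : Kr.map Complex.ofRealHom = K := by
    ext i j; exact Complex.conj_eq_iff_re.mp (congrFun₂ hKreal i j)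
  have hstar (v : ι → ℝ) : star (Complex.ofRealHom ∘ v) = Complex.ofRealHom ∘ v := by
    ext k; simp
  refine ⟨fun i => Complex.ofRealHom ∘ hKr.eigenvectorBasis i, fun i j => ?_,
    fun i => ⟨hstar _, hKr.eigenvalues i, ?_⟩⟩
  · have := orthonormal_iff_ite.mp hKr.eigenvectorBasis.orthonormal i j
    rw [EuclideanSpace.inner_eq_star_dotProduct, star_trivial, dotProduct_comm] at this
    rw [hstar, ← RingHom.map_dotProduct, this, apply_ite Complex.ofRealHom, map_one, map_zero]
  · ext k
    rw [← hK_eq, ← RingHom.map_mulVec, hKr.mulVec_eigenvectorBasis]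
    simp

noncomputable def involutionSqrt (S : Matrix ι ι ℂ) : Matrix ι ι ℂ :=
  ((1 + Complex.I) / 2) • 1 + ((1 - Complex.I) / 2) • S

variable {S : Matrix ι ι ℂ}

theorem commute_involutionSqrt : Commute S (involutionSqrt S) :=
  ((Commute.one_right S).smul_right _).add_right ((Commute.refl S).smul_right _)

theorem involutionSqrt_mul_self (hS : S * S = 1) : involutionSqrt S * involutionSqrt S = S := by
  simp only [involutionSqrt, mul_add, add_mul, mul_smul_comm, smul_mul_assoc, mul_one, one_mul, hS]
  linear_combination (norm := module) (1 / 2 : ℂ) • Complex.I_sq • (1 - S)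

omit [Fintype ι] in
theorem transpose_involutionSqrt (hSsymm : Sᵀ = S) : (involutionSqrt S)ᵀ = involutionSqrt S := by
  simp [involutionSqrt, hSsymm]

theorem conjTranspose_involutionSqrt (hSherm : S.IsHermitian) (hS : S * S = 1) :
    (involutionSqrt S)ᴴ = involutionSqrt S * S := by
  have hstar : star ((1 + Complex.I) / 2) = (1 - Complex.I) / 2 ∧
      star ((1 - Complex.I) / 2) = (1 + Complex.I) / 2 := by
    constructor <;> apply Complex.ext <;> simp
  simp only [involutionSqrt, conjTranspose_add, conjTranspose_smul, conjTranspose_one, hSherm.eq,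
    hstar, add_mul, smul_mul_assoc, one_mul, hS]
  abel

theorem conjTranspose_involutionSqrt_mul_self (hSherm : S.IsHermitian) (hS : S * S = 1) :
    (involutionSqrt S)ᴴ * involutionSqrt S = 1 := by
  rw [conjTranspose_involutionSqrt hSherm hS, mul_assoc, commute_involutionSqrt.eq,
    ← mul_assoc, involutionSqrt_mul_self hS, hS]

theorem involution_mul_involutionSqrt_mul (hS : S * S = 1) :
    S * (involutionSqrt S * S) = involutionSqrt S := by
  rw [← mul_assoc, commute_involutionSqrt.eq, mul_assoc, hS, mul_one]

theorem map_conj_involutionSqrt (hSherm : S.IsHermitian) (hSsymm : Sᵀ = S) (hS : S * S = 1) :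
    (involutionSqrt S).map (starRingEnd ℂ) = involutionSqrt S * S := by
  rw [← Complex.star_def, ← conjTranspose_transpose, conjTranspose_involutionSqrt hSherm hS,
    transpose_mul, hSsymm, transpose_involutionSqrt hSsymm, commute_involutionSqrt.eq]

theorem mulVec_star_involutionSqrt_mulVec (hSherm : S.IsHermitian) (hSsymm : Sᵀ = S)
    (hS : S * S = 1) {v : ι → ℂ} (hv : star v = v) :
    S *ᵥ star (involutionSqrt S *ᵥ v) = involutionSqrt S *ᵥ v := by
  rw [star_mulVec, ← transpose_transpose (involutionSqrt S)ᴴ, vecMul_transpose,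
    conjTranspose_transpose, Complex.star_def, map_conj_involutionSqrt hSherm hSsymm hS, hv,
    mulVec_mulVec, involution_mul_involutionSqrt_mul hS]

theorem map_conj_conjTranspose_involutionSqrt_mul_mul (hSherm : S.IsHermitian)
    (hSsymm : Sᵀ = S) (hS : S * S = 1) {H : Matrix ι ι ℂ}
    (hH : H.map (starRingEnd ℂ) = S * H * S) :
    ((involutionSqrt S)ᴴ * H * involutionSqrt S).map (starRingEnd ℂ) =
      (involutionSqrt S)ᴴ * H * involutionSqrt S := by
  have hU_star : (involutionSqrt S)ᴴ.map (starRingEnd ℂ) = involutionSqrt S := by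
    rw [← Complex.star_def, ← conjTranspose_transpose, conjTranspose_conjTranspose,
      transpose_involutionSqrt hSsymm]
  rw [Matrix.map_mul, Matrix.map_mul, hU_star, hH, map_conj_involutionSqrt hSherm hSsymm hS,
    conjTranspose_involutionSqrt hSherm hS]
  simp only [mul_assoc, involution_mul_involutionSqrt_mul hS]

end Matrix

theorem stmt0_general (n : ℕ) (S H : Matrix (Fin n) (Fin n) ℂ)
    (hSreal : ∀ i j, (S i j).im = 0)
    (hSsymm : Sᵀ = S) (hSsq : S * S = 1)
    (hH : H.IsHermitian)
    (hHconj : H.map (starRingEnd ℂ) = S * H * S) :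
    ∃ φ : Fin n → (Fin n → ℂ),
      (∀ i j, star (φ i) ⬝ᵥ φ j = if i = j then 1 else 0) ∧
      LinearIndependent ℂ φ ∧
      Submodule.span ℂ (Set.range φ) = ⊤ ∧
      ∀ i, (∃ μ : ℂ, H.mulVec (φ i) = μ • φ i) ∧
        ∃ p : ℂ, ‖p‖ = 1 ∧ φ i = p • S.mulVec (star (φ i)) := by
  have hSherm : S.IsHermitian := by
    ext i j
    exact (Complex.conj_eq_iff_im.mpr (hSreal j i)).trans (congrFun₂ hSsymm i j)
  set U := involutionSqrt S
  have hU : Uᴴ * U = 1 := conjTranspose_involutionSqrt_mul_self hSherm hSsq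
  obtain ⟨ψ, hψ_orth, hψ⟩ :=
    exists_orthonormal_real_eigenvectors (isHermitian_conjTranspose_mul_mul U hH)
      (map_conj_conjTranspose_involutionSqrt_mul_mul hSherm hSsymm hSsq hHconj)
  have hφ_orth : ∀ i j, star (U *ᵥ ψ i) ⬝ᵥ (U *ᵥ ψ j) = if i = j then 1 else 0 := fun i j => by
    rw [star_mulVec_dotProduct_mulVec_of_isometry hU, hψ_orth]
  have hφ_indep := linearIndependent_of_star_dotProduct_eq_ite hφ_orth
  refine ⟨fun i => U *ᵥ ψ i, hφ_orth, hφ_indep,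
    hφ_indep.span_eq_top_of_card_eq_finrank' (by simp), fun i => ⟨?_, 1, norm_one, ?_⟩⟩
  · obtain ⟨μ, hμ⟩ := (hψ i).2
    refine ⟨μ, ?_⟩
    rw [← mulVec_smul, ← hμ, mulVec_mulVec, mulVec_mulVec, ← mul_assoc, ← mul_assoc,
      mul_eq_one_comm.mp hU, one_mul]
  · rw [one_smul, mulVec_star_involutionSqrt_mulVec hSherm hSsymm hSsq (hψ i).1]

/-- Lemma 1 (matrix form): eigenvectors of a Hermitian matrix commuting with a real
symmetric involution `S` (in the antilinear sense `conj H = S H S`) can be chosen to form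
an orthonormal basis of self-conjugate vectors up to a phase. -/
theorem stmt0 (n : ℕ) (hn : 0 < n) (S H : Matrix (Fin n) (Fin n) ℂ)
    (hSreal : ∀ i j, (S i j).im = 0)
    (hSsymm : Sᵀ = S) (hSsq : S * S = 1)
    (hH : H.IsHermitian)
    (hHconj : H.map (starRingEnd ℂ) = S * H * S) :
    ∃ φ : Fin n → (Fin n → ℂ),
      (∀ i j, star (φ i) ⬝ᵥ φ j = if i = j then 1 else 0) ∧
      LinearIndependent ℂ φ ∧
      Submodule.span ℂ (Set.range φ) = ⊤ ∧
      ∀ i, (∃ μ : ℂ, H.mulVec (φ i) = μ • φ i) ∧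
        ∃ p : ℂ, ‖p‖ = 1 ∧ φ i = p • S.mulVec (star (φ i)) :=
  stmt0_general n S H hSreal hSsymm hSsq hH hHconj
end

section
/- Let n be a positive integer, let S be an n×n matrix with real entries satisfying Sᵀ = S and S·S = 1, and let D be an n×n complex matrix with conj(D) = −S·D·S. Suppose φ ∈ ℂⁿ, ξ is a real number with ξ > 0, p is a complex number with |p| = 1, DᴴD·φ = ξ²·φ, and φ = p • (S·conj(φ)). Then the vector φ̃ := ξ⁻¹ • (D·φ) satisfies DDᴴ·φ̃ = ξ²·φ̃, ‖φ̃‖ = ‖φ‖, and φ̃ = −p • (S·conj(φ̃)). -/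
/-!
`D` maps the `ξ²`-eigenspace of `Dᴴ D` into that of `D Dᴴ`, and
`‖D φ‖² = ⟨φ, Dᴴ D φ⟩ = ξ² ‖φ‖²`, so `φ̃ = ξ⁻¹ D φ` is a `ξ²`-eigenvector of `D Dᴴ` with
`‖φ̃‖ = ‖φ‖`. Conjugating `D φ` with `conj D = -S D S`, `S² = 1` and `conj φ = conj p • S φ`
gives `S (conj (D φ)) = -conj p • D φ`, and `p conj p = 1` turns this into the reality property
with phase `-p`; the real factor `ξ⁻¹` passes through.
-/

open Matrix

namespace Matrix

variable {m n α : Type*} [Fintype n]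

lemma mulVec_mulVec_of_mul_mulVec_eq_smul [CommSemiring α] {A : Matrix m n α}
    {B : Matrix n m α} [Fintype m] {v : n → α} {c : α} (h : (B * A) *ᵥ v = c • v) :
    (A * B) *ᵥ (A *ᵥ v) = c • (A *ᵥ v) := by
  rw [mulVec_mulVec, Matrix.mul_assoc, ← mulVec_mulVec, h, mulVec_smul]

lemma star_mulVec_eq_map_star [CommSemiring α] [StarRing α] (A : Matrix m n α) (v : n → α) :
    star (A *ᵥ v) = A.map star *ᵥ star v := by
  rw [star_mulVec, conjTranspose, transpose_map, vecMul_transpose]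

lemma mulVec_eq_neg_smul_mulVec_star [DecidableEq n] [CommRing α] [StarRing α]
    {S D : Matrix n n α} (hSstar : S.map star = S) (hSsq : S * S = 1)
    (hD : D.map star = -(S * D * S)) {φ : n → α} {p : α} (hp : p * star p = 1)
    (hφ : φ = p • S *ᵥ star φ) :
    D *ᵥ φ = (-p) • S *ᵥ star (D *ᵥ φ) := by
  have hstarφ : star φ = star p • S *ᵥ φ := by
    conv_lhs => rw [hφ]
    rw [star_smul, star_mulVec_eq_map_star, hSstar, star_star]
  have hSSDSS : S * (S * D * S) * S = D := by
    simp only [← Matrix.mul_assoc, hSsq, one_mul]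
    rw [Matrix.mul_assoc, hSsq, mul_one]
  have hS_star_Dφ : S *ᵥ star (D *ᵥ φ) = -(star p • D *ᵥ φ) := by
    rw [star_mulVec_eq_map_star, hD, hstarφ, mulVec_smul, mulVec_smul, mulVec_mulVec,
      mulVec_mulVec, Matrix.mul_neg, Matrix.neg_mul, hSSDSS, neg_mulVec, smul_neg]
  rw [hS_star_Dφ, smul_neg, neg_smul, neg_neg, smul_smul, hp, one_smul]


variable {𝕜 : Type*} [RCLike 𝕜]

lemma norm_toLp_sq (v : n → 𝕜) : ‖WithLp.toLp 2 v‖ ^ 2 = RCLike.re (star v ⬝ᵥ v) := by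
  rw [← inner_self_eq_norm_sq (𝕜 := 𝕜), EuclideanSpace.inner_toLp_toLp, dotProduct_comm]

lemma norm_toLp_mulVec_sq [Fintype m] (A : Matrix m n 𝕜) (v : n → 𝕜) :
    ‖WithLp.toLp 2 (A *ᵥ v)‖ ^ 2 = RCLike.re (star v ⬝ᵥ (Aᴴ * A) *ᵥ v) := by
  rw [norm_toLp_sq, star_mulVec, ← dotProduct_mulVec, mulVec_mulVec]

lemma norm_toLp_mulVec_of_conjTranspose_mul_mulVec [Fintype m] {A : Matrix m n 𝕜}
    {v : n → 𝕜} {ξ : ℝ} (hξ : 0 ≤ ξ) (h : (Aᴴ * A) *ᵥ v = ((ξ : 𝕜) ^ 2) • v) :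
    ‖WithLp.toLp 2 (A *ᵥ v)‖ = ξ * ‖WithLp.toLp 2 v‖ := by
  have hsq : ‖WithLp.toLp 2 (A *ᵥ v)‖ ^ 2 = (ξ * ‖WithLp.toLp 2 v‖) ^ 2 := by
    rw [norm_toLp_mulVec_sq, h, dotProduct_smul, mul_pow, norm_toLp_sq, ← RCLike.ofReal_pow,
      smul_eq_mul, RCLike.re_ofReal_mul]
  exact (sq_eq_sq₀ (norm_nonneg _) (by positivity)).mp hsq

end Matrix

theorem stmt1_general (n : ℕ) (S D : Matrix (Fin n) (Fin n) ℂ)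
    (hSreal : ∀ i j, (S i j).im = 0) (hSsq : S * S = 1)
    (hD : D.map (starRingEnd ℂ) = -(S * D * S))
    (φ : Fin n → ℂ) (ξ : ℝ) (hξ : 0 < ξ) (p : ℂ) (hp : ‖p‖ = 1)
    (hEig : (Dᴴ * D).mulVec φ = ((ξ : ℂ) ^ 2) • φ)
    (hφ : φ = p • S.mulVec (star φ)) :
    (D * Dᴴ).mulVec ((ξ : ℂ)⁻¹ • D.mulVec φ) = ((ξ : ℂ) ^ 2) • ((ξ : ℂ)⁻¹ • D.mulVec φ) ∧
    ‖(EuclideanSpace.equiv (Fin n) ℂ).symm ((ξ : ℂ)⁻¹ • D.mulVec φ)‖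
      = ‖(EuclideanSpace.equiv (Fin n) ℂ).symm φ‖ ∧
    (ξ : ℂ)⁻¹ • D.mulVec φ = (-p) • S.mulVec (star ((ξ : ℂ)⁻¹ • D.mulVec φ)) := by
  have hSstar : S.map star = S := by
    ext i j
    exact Complex.conj_eq_iff_im.mpr (hSreal i j)
  have hpstar : p * star p = 1 := by
    rw [Complex.star_def, Complex.mul_conj', hp]
    norm_num
  refine ⟨?_, ?_, ?_⟩
  · rw [mulVec_smul, mulVec_mulVec_of_mul_mulVec_eq_smul hEig, smul_comm]
  · change ‖WithLp.toLp 2 ((ξ : ℂ)⁻¹ • D *ᵥ φ)‖ = ‖WithLp.toLp 2 φ‖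
    rw [WithLp.toLp_smul, norm_smul, norm_toLp_mulVec_of_conjTranspose_mul_mulVec hξ.le hEig,
      norm_inv, Complex.norm_real, Real.norm_of_nonneg hξ.le, inv_mul_cancel_left₀ hξ.ne']
  · rw [star_smul, ← Complex.ofReal_inv, Complex.star_def, Complex.conj_ofReal, mulVec_smul,
      smul_comm, ← mulVec_eq_neg_smul_mulVec_star hSstar hSsq hD hpstar hφ]

/-- Lemma 1, second part: for a nonzero singular value `ξ` of `D`, the vector
`φ̃ = ξ⁻¹ • D φ` is an eigenvector of `D Dᴴ` with the same eigenvalue `ξ²`, has the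
same Euclidean norm as `φ`, and satisfies the reality property with the opposite phase. -/
theorem stmt1 (n : ℕ) (hn : 0 < n) (S D : Matrix (Fin n) (Fin n) ℂ)
    (hSreal : ∀ i j, (S i j).im = 0) (hSsymm : Sᵀ = S) (hSsq : S * S = 1)
    (hD : D.map (starRingEnd ℂ) = -(S * D * S))
    (φ : Fin n → ℂ) (ξ : ℝ) (hξ : 0 < ξ) (p : ℂ) (hp : ‖p‖ = 1)
    (hEig : (Dᴴ * D).mulVec φ = ((ξ : ℂ) ^ 2) • φ)
    (hφ : φ = p • S.mulVec (star φ)) :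
    (D * Dᴴ).mulVec ((ξ : ℂ)⁻¹ • D.mulVec φ) = ((ξ : ℂ) ^ 2) • ((ξ : ℂ)⁻¹ • D.mulVec φ) ∧
    ‖(EuclideanSpace.equiv (Fin n) ℂ).symm ((ξ : ℂ)⁻¹ • D.mulVec φ)‖
      = ‖(EuclideanSpace.equiv (Fin n) ℂ).symm φ‖ ∧
    (ξ : ℂ)⁻¹ • D.mulVec φ = (-p) • S.mulVec (star ((ξ : ℂ)⁻¹ • D.mulVec φ)) :=
  stmt1_general n S D hSreal hSsq hD φ ξ hξ p hp hEig hφ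
end

section
/- Let n be a positive integer and let A, B, γ be n×n complex matrices satisfying Aᴴ = −A, Bᴴ = B, γᴴ = γ, γ·γ = 1, γ·A = −A·γ, and γ·B = −B·γ. For a real number μ set D := A + μ•B, D₅ := A + μ•(B·γ), P_R := (1 + γ)/2, and P_L := (1 − γ)/2. Then D₅ᴴ = −D₅, and the squares satisfy D₅² = −(DᴴD)·P_R − (DDᴴ)·P_L, while D₅' := A − μ•(B·γ) satisfies (D₅')² = −(DᴴD)·P_L − (DDᴴ)·P_R. -/
open Matrix

/-- Operator identity of section 3.3: with `D = A + μB` and `D₅ = A + μBγ`, the operator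
`D₅` is anti-Hermitian and `D₅² = -(DᴴD)·P_R - (DDᴴ)·P_L`, while `D₅' = A - μBγ`
satisfies `(D₅')² = -(DᴴD)·P_L - (DDᴴ)·P_R`. -/
theorem stmt2 (n : ℕ) (hn : 0 < n) (A B γ : Matrix (Fin n) (Fin n) ℂ)
    (hA : Aᴴ = -A) (hB : Bᴴ = B) (hγH : γᴴ = γ) (hγ2 : γ * γ = 1)
    (hγA : γ * A = -(A * γ)) (hγB : γ * B = -(B * γ)) (μ : ℝ)
    (D D₅ D₅' PR PL : Matrix (Fin n) (Fin n) ℂ)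
    (hD : D = A + (μ : ℂ) • B)
    (hD₅ : D₅ = A + (μ : ℂ) • (B * γ))
    (hD₅' : D₅' = A - (μ : ℂ) • (B * γ))
    (hPR : PR = (2 : ℂ)⁻¹ • (1 + γ))
    (hPL : PL = (2 : ℂ)⁻¹ • (1 - γ)) :
    D₅ᴴ = -D₅ ∧
    D₅ * D₅ = -((Dᴴ * D) * PR) - (D * Dᴴ) * PL ∧
    D₅' * D₅' = -((Dᴴ * D) * PL) - (D * Dᴴ) * PR := by
  subst hD hD₅ hD₅' hPR hPL
  have hγA' : ∀ x, γ * (A * x) = -(A * (γ * x)) := fun x => by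
    rw [← mul_assoc, hγA, neg_mul, mul_assoc]
  have hγB' : ∀ x, γ * (B * x) = -(B * (γ * x)) := fun x => by
    rw [← mul_assoc, hγB, neg_mul, mul_assoc]
  have hγ2' : ∀ x, γ * (γ * x) = x := fun x => by
    rw [← mul_assoc, hγ2, one_mul]
  have hDH : (A + (μ : ℂ) • B)ᴴ = -A + (μ : ℂ) • B := by
    simp [conjTranspose_add, conjTranspose_smul, hA, hB]
  refine ⟨?_, ?_, ?_⟩
  · simp only [conjTranspose_add, conjTranspose_smul, conjTranspose_mul, hA, hB, hγH,
      Complex.star_def, Complex.conj_ofReal, hγB]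
    module
  · rw [hDH]
    simp only [mul_add, add_mul, mul_sub, sub_mul, neg_mul, mul_neg, neg_neg, neg_add,
      smul_mul_assoc, mul_smul_comm, mul_assoc, hγA', hγB', hγ2', hγA, hγB, hγ2,
      smul_smul, smul_add, smul_sub, smul_neg, mul_one, one_mul]
    module
  · rw [hDH]
    simp only [mul_add, add_mul, mul_sub, sub_mul, neg_mul, mul_neg, neg_neg, neg_add,
      smul_mul_assoc, mul_smul_comm, mul_assoc, hγA', hγB', hγ2', hγA, hγB, hγ2,
      smul_smul, smul_add, smul_sub, smul_neg, mul_one, one_mul]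
    module
end

section
/- Let n be a positive integer and let D, S be n×n complex matrices with S·conj(S) = −1 and S·conj(D) = D·S. Then the determinant of D is a real number and det D ≥ 0. -/
/-!
If `J` is antilinear with `J² = -1` and commutes with `f`, then for an eigenvector `v` of `f`
with eigenvalue `μ`, `J v` is an eigenvector with eigenvalue `conj μ`, and `v, J v` are
independent because `J v = c • v` would give `|c|² = -1`. Their span is invariant under `f` and
`J`, `f` has determinant `μ * conj μ = |μ|²` on it, and `J` descends to the quotient, so by
induction on the dimension `det f` is a product of such nonnegative reals.
-/

open Matrix Module Submodule Set

def IsQuaternionicStructure {V : Type*} [AddCommGroup V] [Module ℂ V] (J : V →ₗ⋆[ℂ] V) : Prop :=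
  ∀ x, J (J x) = -x

namespace IsQuaternionicStructure

variable {V : Type*} [AddCommGroup V] [Module ℂ V] {J : V →ₗ⋆[ℂ] V}

theorem linearIndependent_pair (hJ : IsQuaternionicStructure J) {v : V} (hv : v ≠ 0) :
    LinearIndependent ℂ ![v, J v] := by
  rw [LinearIndependent.pair_iff' hv]
  intro c hc
  have hcv : ((Complex.normSq c : ℂ) + 1) • v = 0 := by
    have h := hJ v
    rw [← hc, map_smulₛₗ, ← hc, smul_smul, ← Complex.normSq_eq_conj_mul_self] at h
    rw [add_smul, one_smul, h, neg_add_cancel]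
  have hpos : (Complex.normSq c : ℂ) + 1 ≠ 0 := by
    have := Complex.normSq_nonneg c
    exact_mod_cast (by positivity : Complex.normSq c + 1 ≠ 0)
  exact hv ((smul_eq_zero.mp hcv).resolve_left hpos)

theorem span_pair_le_comap (hJ : IsQuaternionicStructure J) (v : V) :
    span ℂ (range ![v, J v]) ≤ (span ℂ (range ![v, J v])).comap J := by
  rw [span_le, range_subset_iff]
  intro i
  fin_cases i
  · exact subset_span ⟨1, rfl⟩
  · simpa [hJ v] using neg_mem (subset_span ⟨0, rfl⟩ : v ∈ span ℂ (range ![v, J v]))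

theorem span_pair_le_comap_of_commute {f : V →ₗ[ℂ] V} (hfJ : ∀ x, f (J x) = J (f x)) {v : V}
    {μ : ℂ} (hμ : f v = μ • v) :
    span ℂ (range ![v, J v]) ≤ (span ℂ (range ![v, J v])).comap f := by
  rw [span_le, range_subset_iff]
  intro i
  fin_cases i
  · simpa [hμ] using smul_mem _ μ (subset_span ⟨0, rfl⟩ : v ∈ span ℂ (range ![v, J v]))
  · simpa [hfJ, hμ] using
      smul_mem _ (starRingEnd ℂ μ) (subset_span ⟨1, rfl⟩ : J v ∈ span ℂ (range ![v, J v]))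

theorem det_restrict_span_pair (hJ : IsQuaternionicStructure J) {f : V →ₗ[ℂ] V}
    (hfJ : ∀ x, f (J x) = J (f x)) {v : V} (hv : v ≠ 0) {μ : ℂ} (hμ : f v = μ • v) :
    (f.restrict (span_pair_le_comap_of_commute hfJ hμ)).det = Complex.normSq μ := by
  let b := Basis.span (hJ.linearIndependent_pair hv)
  have hb0 : f.restrict (span_pair_le_comap_of_commute hfJ hμ) (b 0) = μ • b 0 := by
    ext; simp [b, hμ]
  have hb1 : f.restrict (span_pair_le_comap_of_commute hfJ hμ) (b 1) = starRingEnd ℂ μ • b 1 := by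
    ext; simp [b, hμ, hfJ]
  rw [← LinearMap.det_toMatrix b, det_fin_two]
  simp [LinearMap.toMatrix_apply, hb0, hb1, Complex.normSq_eq_conj_mul_self, mul_comm]

theorem mapQ (hJ : IsQuaternionicStructure J) (W : Submodule ℂ V) (hW : W ≤ W.comap J) :
    IsQuaternionicStructure (W.mapQ W J hW) := by
  intro x
  obtain ⟨x, rfl⟩ := W.mkQ_surjective x
  simp [hJ x]

theorem exists_det_eq_ofReal_nonneg [FiniteDimensional ℂ V] (hJ : IsQuaternionicStructure J)
    (f : V →ₗ[ℂ] V) (hfJ : ∀ x, f (J x) = J (f x)) : ∃ r : ℝ, f.det = r ∧ 0 ≤ r := by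
  induction hk : finrank ℂ V using Nat.strong_induction_on generalizing V with
  | _ k ih =>
  rcases subsingleton_or_nontrivial V with hV | hV
  · exact ⟨1, by simp [LinearMap.det_eq_one_of_subsingleton], zero_le_one⟩
  obtain ⟨μ, hμ⟩ := Module.End.exists_eigenvalue f
  obtain ⟨v, hv⟩ := hμ.exists_hasEigenvector
  replace hμ : f v = μ • v := hv.apply_eq_smul
  set W := span ℂ (range ![v, J v])
  have hJW := hJ.span_pair_le_comap v
  have hfW := span_pair_le_comap_of_commute hfJ hμ
  have hrank : finrank ℂ (V ⧸ W) < k := by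
    have h2 : finrank ℂ W = 2 := by
      simp [W, finrank_span_eq_card (hJ.linearIndependent_pair hv.2)]
    have := W.finrank_quotient_add_finrank
    omega
  have hfJW : ∀ x, W.mapQ W f hfW (W.mapQ W J hJW x) = W.mapQ W J hJW (W.mapQ W f hfW x) := by
    intro x
    obtain ⟨x, rfl⟩ := W.mkQ_surjective x
    simp [hfJ x]
  obtain ⟨r, hr, hr0⟩ := ih _ hrank (hJ.mapQ W hJW) (W.mapQ W f hfW) hfJW rfl
  refine ⟨Complex.normSq μ * r, ?_, mul_nonneg (Complex.normSq_nonneg μ) hr0⟩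
  rw [LinearMap.det_eq_det_mul_det W f hfW, hJ.det_restrict_span_pair hfJ hv.2 hμ, hr,
    Complex.ofReal_mul]

end IsQuaternionicStructure

theorem Matrix.star_mulVec_eq_map_mulVec {m n R : Type*} [Fintype n] [CommSemiring R] [StarRing R]
    (M : Matrix m n R) (v : n → R) : star (M *ᵥ v) = M.map (starRingEnd R) *ᵥ star v := by
  rw [star_mulVec, conjTranspose, transpose_map, vecMul_transpose]; rfl

theorem stmt5_general (n : ℕ) (D S : Matrix (Fin n) (Fin n) ℂ)
    (hS : S * S.map (starRingEnd ℂ) = -1)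
    (hSD : S * D.map (starRingEnd ℂ) = D * S) :
    ∃ r : ℝ, D.det = (r : ℂ) ∧ 0 ≤ r := by
  let J : (Fin n → ℂ) →ₗ⋆[ℂ] (Fin n → ℂ) := (toLin' S).comp (starLinearEquiv ℂ).toLinearMap
  have hJ : IsQuaternionicStructure J := fun x => by
    simp [J, star_mulVec_eq_map_mulVec, mulVec_mulVec, hS, neg_mulVec]
  have hDJ : ∀ x, toLin' D (J x) = J (toLin' D x) := fun x => by
    simp [J, star_mulVec_eq_map_mulVec, mulVec_mulVec, hSD]
  rw [← LinearMap.det_toLin']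
  exact hJ.exists_det_eq_ofReal_nonneg (toLin' D) hDJ

/-- β = 4 positivity: a quaternionic structure (`S conj(S) = -1`, `S conj(D) = D S`)
forces `det D` to be real and nonnegative. -/
theorem stmt5 (n : ℕ) (hn : 0 < n) (D S : Matrix (Fin n) (Fin n) ℂ)
    (hS : S * S.map (starRingEnd ℂ) = -1)
    (hSD : S * D.map (starRingEnd ℂ) = D * S) :
    ∃ r : ℝ, D.det = (r : ℂ) ∧ 0 ≤ r :=
  stmt5_general n D S hS hSD
end

section
/- Let n be a positive integer, let S be an n×n complex unitary matrix with Sᵀ = S (equivalently S·conj(S) = 1), and let M be an n×n complex matrix with S·conj(M) = M·S. Then there exists an n×n unitary matrix U such that every entry of Uᴴ·M·U is real. -/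
/-!
Write `S = U Uᵀ` with `U` unitary. Then `S conj(M) = M S` says exactly that `Uᴴ M U` is fixed by
entrywise conjugation, i.e. real.

To find `U`, rotate `S` by a unit scalar so that `-1` is not an eigenvalue. The Cayley transform
`K = i (1 - S)(1 + S)⁻¹` of the rotated matrix is Hermitian (as `S` is unitary) and symmetric (as
`S` is), hence a real symmetric matrix, so it is diagonalized by a real orthogonal `O`. Since `S`
is a rational function of `K`, also `S = O D Oᵀ` with `D` diagonal and unitary, and
`U = O √D` works.
-/

open Matrix Polynomial

instance Circle.instInfinite : Infinite Circle :=
  Set.infinite_univ_iff.mp <| ((Set.Icc_infinite zero_lt_one).image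
    (Circle.exp_injOn_Icc (by linarith [Real.pi_gt_three]))).mono (Set.subset_univ _)

namespace Matrix

variable {ι : Type*}

lemma conjTranspose_map_ofReal (O : Matrix ι ι ℝ) :
    (O.map ((↑) : ℝ → ℂ))ᴴ = (O.map ((↑) : ℝ → ℂ))ᵀ := by
  ext i j; simp

variable [Fintype ι]

lemma map_ofReal_mul (A B : Matrix ι ι ℝ) :
    (A * B).map ((↑) : ℝ → ℂ) = A.map (↑) * B.map (↑) :=
  Matrix.map_mul (f := Complex.ofRealHom)

variable [DecidableEq ι]

lemma map_ofReal_mul_transpose {O : Matrix ι ι ℝ} (hO : O ∈ unitaryGroup ι ℝ) :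
    O.map ((↑) : ℝ → ℂ) * (O.map ((↑) : ℝ → ℂ))ᵀ = 1 := by
  have h : O * Oᵀ = 1 := by simpa [star_eq_conjTranspose] using mem_unitaryGroup_iff.mp hO
  rw [← transpose_map, ← map_ofReal_mul, h]
  simp

def IsRealOrthogonallyDiagonalizable (A : Matrix ι ι ℂ) : Prop :=
  ∃ O ∈ unitaryGroup ι ℝ, ∃ w : ι → ℂ,
    A = O.map ((↑) : ℝ → ℂ) * diagonal w * (O.map ((↑) : ℝ → ℂ))ᵀ

namespace IsRealOrthogonallyDiagonalizable

variable {A : Matrix ι ι ℂ}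

lemma smul (hA : IsRealOrthogonallyDiagonalizable A) (c : ℂ) :
    IsRealOrthogonallyDiagonalizable (c • A) := by
  obtain ⟨O, hO, w, rfl⟩ := hA
  exact ⟨O, hO, c • w, by simp [diagonal_smul]⟩

lemma add_smul_one (hA : IsRealOrthogonallyDiagonalizable A) (c : ℂ) :
    IsRealOrthogonallyDiagonalizable (A + c • 1) := by
  obtain ⟨O, hO, w, rfl⟩ := hA
  refine ⟨O, hO, fun i => w i + c, ?_⟩
  rw [← diagonal_add, ← smul_one_eq_diagonal, Matrix.mul_add, Matrix.add_mul, Matrix.mul_smul,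
    Matrix.smul_mul, mul_one, map_ofReal_mul_transpose hO]

lemma inv (hA : IsRealOrthogonallyDiagonalizable A) :
    IsRealOrthogonallyDiagonalizable A⁻¹ := by
  obtain ⟨O, hO, w, rfl⟩ := hA
  have hQ := map_ofReal_mul_transpose hO
  refine ⟨O, hO, Ring.inverse w, ?_⟩
  rw [Matrix.mul_inv_rev, Matrix.mul_inv_rev, inv_diagonal, inv_eq_left_inv hQ,
    inv_eq_right_inv hQ, mul_assoc]

end IsRealOrthogonallyDiagonalizable

lemma IsHermitian.isRealOrthogonallyDiagonalizable_map_ofReal {K : Matrix ι ι ℝ}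
    (hK : K.IsHermitian) : IsRealOrthogonallyDiagonalizable (K.map ((↑) : ℝ → ℂ)) := by
  refine ⟨hK.eigenvectorUnitary, hK.eigenvectorUnitary.2, fun i => hK.eigenvalues i, ?_⟩
  conv_lhs => rw [hK.spectral_theorem]
  simp only [Unitary.conjStarAlgAut_apply, star_eq_conjTranspose,
    conjTranspose_eq_transpose_of_trivial, map_ofReal_mul, transpose_map]
  simp

lemma IsHermitian.isRealOrthogonallyDiagonalizable_of_isSymm {K : Matrix ι ι ℂ}
    (hH : K.IsHermitian) (hS : K.IsSymm) : IsRealOrthogonallyDiagonalizable K := by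
  have hreal : (K.map Complex.re).map ((↑) : ℝ → ℂ) = K := by
    ext i j
    exact Complex.conj_eq_iff_re.mp ((hH.apply j i).trans (hS.apply i j))
  have hKr : (K.map Complex.re).IsHermitian := isHermitian_iff_isSymm.mpr (hS.map _)
  simpa [hreal] using hKr.isRealOrthogonallyDiagonalizable_map_ofReal

lemma diagonal_mem_unitaryGroup_iff {𝕜 : Type*} [RCLike 𝕜] {w : ι → 𝕜} :
    diagonal w ∈ unitaryGroup ι 𝕜 ↔ ∀ i, ‖w i‖ = 1 := by
  rw [mem_unitaryGroup_iff', star_eq_conjTranspose, diagonal_conjTranspose, diagonal_mul_diagonal,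
    ← diagonal_one, diagonal_eq_diagonal_iff]
  refine forall_congr' fun i => ?_
  rw [Pi.star_apply, RCLike.star_def, RCLike.conj_mul]
  norm_cast
  exact pow_eq_one_iff_of_nonneg (norm_nonneg _) two_ne_zero

lemma IsRealOrthogonallyDiagonalizable.exists_mem_unitaryGroup_mul_transpose_eq
    {S : Matrix ι ι ℂ} (hSd : S.IsRealOrthogonallyDiagonalizable) (hS : S ∈ unitaryGroup ι ℂ) :
    ∃ U ∈ unitaryGroup ι ℂ, U * Uᵀ = S := by
  obtain ⟨O, hO, w, rfl⟩ := hSd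
  set Q := O.map ((↑) : ℝ → ℂ)
  have hQQ : Q * Qᵀ = 1 := map_ofReal_mul_transpose hO
  have hstarQ : star Q = Qᵀ := by rw [star_eq_conjTranspose, conjTranspose_map_ofReal]
  have hQ : Q ∈ unitaryGroup ι ℂ := by rw [mem_unitaryGroup_iff, hstarQ, hQQ]
  have hw : ∀ i, ‖w i‖ = 1 := by
    rw [← diagonal_mem_unitaryGroup_iff]
    have h : diagonal w = star Q * (Q * diagonal w * Qᵀ) * Q := by
      rw [hstarQ, ← mul_assoc, ← mul_assoc, mul_eq_one_comm.mp hQQ, one_mul, mul_assoc,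
        mul_eq_one_comm.mp hQQ, mul_one]
    rw [h]
    exact mul_mem (mul_mem (Unitary.star_mem hQ) hS) hQ
  choose c hc using fun i => IsAlgClosed.exists_pow_nat_eq (w i) two_pos
  have hc1 : ∀ i, ‖c i‖ = 1 := fun i => by
    rw [← pow_eq_one_iff_of_nonneg (norm_nonneg _) two_ne_zero, ← norm_pow, hc, hw]
  refine ⟨Q * diagonal c, mul_mem hQ (diagonal_mem_unitaryGroup_iff.mpr hc1), ?_⟩
  rw [transpose_mul, diagonal_transpose, mul_assoc, ← mul_assoc (diagonal c),
    diagonal_mul_diagonal, ← mul_assoc]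
  simp only [← sq, hc]

lemma conjTranspose_inv_one_add_eq {S : Matrix ι ι ℂ} (hS : S ∈ unitaryGroup ι ℂ) :
    ((1 + S)⁻¹)ᴴ = (1 + S)⁻¹ * S := by
  have hSS : Sᴴ * S = 1 := mem_unitaryGroup_iff'.mp hS
  have hSS' : S * Sᴴ = 1 := by simpa [star_eq_conjTranspose] using mem_unitaryGroup_iff.mp hS
  have h : (1 + S)ᴴ = Sᴴ * (1 + S) := by
    rw [conjTranspose_add, conjTranspose_one, mul_add, mul_one, hSS, add_comm]
  rw [conjTranspose_nonsing_inv, h, Matrix.mul_inv_rev, inv_eq_left_inv hSS']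

lemma IsSymm.isRealOrthogonallyDiagonalizable_of_isUnit_det_one_add {S : Matrix ι ι ℂ}
    (hSymm : S.IsSymm) (hS : S ∈ unitaryGroup ι ℂ) (hdet : IsUnit (1 + S).det) :
    IsRealOrthogonallyDiagonalizable S := by
  set T := (1 + S)⁻¹ with hT
  have hTsymm : Tᵀ = T := by
    rw [hT, transpose_nonsing_inv, transpose_add, transpose_one, hSymm.eq]
  have hTH : Tᴴ = 1 - T := by
    rw [hT, conjTranspose_inv_one_add_eq hS, eq_sub_iff_add_eq, ← mul_add_one,
      add_comm S, nonsing_inv_mul _ hdet]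
  -- `K = i (1 - S)(1 + S)⁻¹` is the Cayley transform of `S`
  set K := Complex.I • ((2 : ℂ) • T - 1) with hK
  have hKdiag : IsRealOrthogonallyDiagonalizable K := by
    refine IsHermitian.isRealOrthogonallyDiagonalizable_of_isSymm ?_ ?_
    · rw [IsHermitian, hK, conjTranspose_smul, conjTranspose_sub, conjTranspose_smul, hTH]
      simp only [RCLike.star_def, Complex.conj_I, star_ofNat, conjTranspose_one, neg_smul]
      module
    · rw [IsSymm, hK, transpose_smul, transpose_sub, transpose_smul, hTsymm, transpose_one]
  have hIK : Complex.I • K = 1 - (2 : ℂ) • T := by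
    rw [hK, smul_smul, Complex.I_mul_I]; module
  have hTK : T = (-Complex.I / 2) • K + (1 / 2 : ℂ) • 1 := by
    rw [show (-Complex.I / 2) • K = (-1 / 2 : ℂ) • (Complex.I • K) by
      rw [smul_smul (-1 / 2 : ℂ) Complex.I K]; ring_nf, hIK]
    module
  have hST : S = T⁻¹ + (-1 : ℂ) • 1 := by
    rw [hT, nonsing_inv_nonsing_inv _ hdet, neg_one_smul, add_neg_cancel_comm]
  rw [hST, hTK]
  exact ((hKdiag.smul _).add_smul_one _).inv.add_smul_one _

lemma eval_neg_charpolyRev (A : Matrix ι ι ℂ) (z : ℂ) :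
    A.charpolyRev.eval (-z) = (1 + z • A).det := by
  rw [charpolyRev, ← coe_evalRingHom, RingHom.map_det]
  congr 1
  ext i j
  rcases eq_or_ne i j with rfl | hij <;> simp [*] <;> ring

lemma exists_norm_eq_one_det_one_add_smul_ne_zero (A : Matrix ι ι ℂ) :
    ∃ z : ℂ, ‖z‖ = 1 ∧ (1 + z • A).det ≠ 0 := by
  have hp : A.charpolyRev ≠ 0 := fun h => by simpa [h] using A.eval_charpolyRev
  have hbad : {z : Circle | (1 + (z : ℂ) • A).det = 0}.Finite := by
    refine ((A.charpolyRev.finite_setOfPred_isRoot hp).image Neg.neg).preimage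
      Subtype.val_injective.injOn |>.subset fun z hz => ?_
    exact ⟨-(z : ℂ), by simpa [eval_neg_charpolyRev] using hz.out, neg_neg _⟩
  obtain ⟨z, hz⟩ := hbad.exists_notMem
  exact ⟨z, Circle.norm_coe z, hz⟩

lemma IsSymm.isRealOrthogonallyDiagonalizable_of_mem_unitaryGroup {S : Matrix ι ι ℂ}
    (hSymm : S.IsSymm) (hS : S ∈ unitaryGroup ι ℂ) : IsRealOrthogonallyDiagonalizable S := by
  obtain ⟨z, hz, hdet⟩ := exists_norm_eq_one_det_one_add_smul_ne_zero S
  have hzS : z • S ∈ unitaryGroup ι ℂ := by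
    rw [smul_eq_diagonal_mul]
    exact mul_mem (diagonal_mem_unitaryGroup_iff.mpr fun _ => hz) hS
  have hz0 : z ≠ 0 := norm_ne_zero_iff.mp (hz ▸ one_ne_zero)
  rw [← inv_smul_smul₀ hz0 S]
  exact ((hSymm.smul z).isRealOrthogonallyDiagonalizable_of_isUnit_det_one_add hzS
    (isUnit_iff_ne_zero.mpr hdet)).smul z⁻¹

lemma map_conj_conjTranspose_mul_mul_eq {U M : Matrix ι ι ℂ} (hU : U ∈ unitaryGroup ι ℂ)
    (hM : U * Uᵀ * M.map (starRingEnd ℂ) = M * (U * Uᵀ)) :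
    (Uᴴ * M * U).map (starRingEnd ℂ) = Uᴴ * M * U := by
  have hUU : Uᴴ * U = 1 := mem_unitaryGroup_iff'.mp hU
  have hUU' : Uᵀ * U.map (starRingEnd ℂ) = 1 :=
    mem_unitaryGroup_iff.mp (transpose_mem_unitaryGroup_iff.mpr hU)
  have hUH : Uᴴ.map (starRingEnd ℂ) = Uᵀ := by ext i j; simp
  calc (Uᴴ * M * U).map (starRingEnd ℂ)
      = Uᵀ * M.map (starRingEnd ℂ) * U.map (starRingEnd ℂ) := by
        rw [Matrix.map_mul, Matrix.map_mul, hUH]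
    _ = Uᴴ * (U * Uᵀ * M.map (starRingEnd ℂ)) * U.map (starRingEnd ℂ) := by
        simp only [← mul_assoc, hUU, one_mul]
    _ = Uᴴ * M * U := by
        rw [hM]; simp only [mul_assoc, hUU', mul_one]

end Matrix

open Matrix

theorem stmt6_general (n : ℕ) (S M : Matrix (Fin n) (Fin n) ℂ)
    (hSu : Sᴴ * S = 1) (hSsymm : Sᵀ = S)
    (hSM : S * M.map (starRingEnd ℂ) = M * S) :
    ∃ U : Matrix (Fin n) (Fin n) ℂ, Uᴴ * U = 1 ∧
      ∀ i j, ((Uᴴ * M * U) i j).im = 0 := by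
  have hS : S ∈ unitaryGroup (Fin n) ℂ := mem_unitaryGroup_iff'.mpr hSu
  obtain ⟨U, hU, rfl⟩ := (IsSymm.isRealOrthogonallyDiagonalizable_of_mem_unitaryGroup hSsymm hS
    ).exists_mem_unitaryGroup_mul_transpose_eq hS
  have hreal := map_conj_conjTranspose_mul_mul_eq hU hSM
  exact ⟨U, mem_unitaryGroup_iff'.mp hU, fun i j =>
    Complex.conj_eq_iff_im.mp (congrFun (congrFun hreal i) j)⟩

/-- β = 1 reality: if `M` commutes with the anti-unitary map `v ↦ S conj(v)` where `S` is
unitary symmetric (so the anti-unitary squares to `+1`), then `M` can be conjugated by a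
unitary matrix to a matrix with real entries. -/
theorem stmt6 (n : ℕ) (hn : 0 < n) (S M : Matrix (Fin n) (Fin n) ℂ)
    (hSu : Sᴴ * S = 1) (hSsymm : Sᵀ = S)
    (hSM : S * M.map (starRingEnd ℂ) = M * S) :
    ∃ U : Matrix (Fin n) (Fin n) ℂ, Uᴴ * U = 1 ∧
      ∀ i j, ((Uᴴ * M * U) i j).im = 0 :=
  stmt6_general n S M hSu hSsymm hSM
end
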